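/- Along the upper P-positions of Rational Wythoff Nim the heap-size ratio converges to (q₂ + φ(q₁+q₂))/(p₂ + φ(p₁+p₂)): for every ε > 0 there exists N such that every P-position (A,B) of Rational Wythoff Nim with A ≥ N and B/A ≥ (q₁+q₂)/(p₁+p₂) satisfies |B/A − (q₂ + φ(q₁+q₂))/(p₂ + φ(p₁+p₂))| < ε, where φ := (1+√5)/2. -/

import Mathlib

/-- Membership in the set of allowed positions `B_Q`. -/
def inBQ (p1 q1 p2 q2 : ℕ) (pos : ℕ × ℕ) : Prop :=
  pos.1 * q1 ≤ pos.2 * p1 ∧ pos.2 * p2 ≤ pos.1 * q2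

/-- Membership in the set `T_Q` (the inequalities are read in ℤ). -/
def inTQ (p1 q1 p2 q2 : ℕ) (pos : ℕ × ℕ) : Prop :=
  inBQ p1 q1 p2 q2 pos ∧
    (p1 : ℤ) * ((pos.2 : ℤ) - (q2 : ℤ)) < (q1 : ℤ) * ((pos.1 : ℤ) - (p2 : ℤ)) ∧
    (p2 : ℤ) * ((pos.2 : ℤ) - (q1 : ℤ)) > (q2 : ℤ) * ((pos.1 : ℤ) - (p1 : ℤ))

/-- A legal move of the Q-subtraction game `G_Q(M)`. -/
def QMove (p1 q1 p2 q2 : ℕ) (M : Set (ℕ × ℕ)) (pos pos' : ℕ × ℕ) : Prop :=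
  ∃ s t : ℕ, (s, t) ∈ M ∧
    p1 * s + p2 * t ≤ pos.1 ∧ q1 * s + q2 * t ≤ pos.2 ∧
    pos'.1 = pos.1 - (p1 * s + p2 * t) ∧ pos'.2 = pos.2 - (q1 * s + q2 * t) ∧
    inBQ p1 q1 p2 q2 pos'

/-- `pos` is a P-position of the game with move relation `move`: every legal move
leads to a non-P-position.  (Every legal move of the games considered here strictly
decreases the coordinate sum, which makes the recursion well-founded.) -/
def PPos (move : ℕ × ℕ → ℕ × ℕ → Prop) : ℕ × ℕ → Prop
  | pos => ∀ pos', move pos pos' → pos'.1 + pos'.2 < pos.1 + pos.2 → ¬ PPos move pos'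
termination_by pos => pos.1 + pos.2

/-- The move set of Rational Wythoff Nim. -/
def MRW : Set (ℕ × ℕ) := {m | ∃ t : ℕ, 1 ≤ t ∧ (m = (0, t) ∨ m = (t, 0) ∨ m = (t, t))}

/-- The golden ratio `φ = (1+√5)/2`. -/
noncomputable def phi : ℝ := (1 + Real.sqrt 5) / 2

/-!
A position `(A, B)` of `B_Q` is determined by its coordinates `σ = A q₂ - B p₂`, `τ = B p₁ - A q₁`
(Cramer's rule in the basis `(p₁, q₁), (p₂, q₂)`, scaled by `D`). The move `(s, t)` subtracts
`(s D, t D)` from `(σ, τ)`, and it is legal exactly when both stay nonnegative. Hence Rational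
Wythoff Nim at `(A, B)` is Wythoff Nim at `(⌊σ / D⌋, ⌊τ / D⌋)`, whose P-positions are the pairs
`(⌊nφ⌋, ⌊nφ²⌋)` and their mirror images (Rayleigh's theorem). The ratio condition means `σ ≤ τ`,
so `τ - φ σ = O(D)`; since `B (p₁ + φ p₂) - (q₁ + φ q₂) A = τ - φ σ`, the ratio `B / A` tends to
`(q₁ + φ q₂) / (p₁ + φ p₂)`, which is the stated limit because `φ (q₁ + φ q₂) = q₂ + φ (q₁ + q₂)`.
-/

open Real goldenRatio

-- Wythoff Nim is `SubMove MRW`.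
def SubMove (M : Set (ℕ × ℕ)) (w w' : ℕ × ℕ) : Prop :=
  ∃ s t : ℕ, (s, t) ∈ M ∧ w'.1 + s = w.1 ∧ w'.2 + t = w.2

lemma subMove_MRW_iff {w w' : ℕ × ℕ} :
    SubMove MRW w w' ↔ ∃ k, 1 ≤ k ∧ ((w'.1 = w.1 ∧ w'.2 + k = w.2) ∨
      (w'.1 + k = w.1 ∧ w'.2 = w.2) ∨ (w'.1 + k = w.1 ∧ w'.2 + k = w.2)) := by
  constructor
  · rintro ⟨s, t, ⟨k, hk, hst | hst | hst⟩, h₁, h₂⟩ <;>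
      obtain ⟨rfl, rfl⟩ := Prod.mk.inj hst <;> exact ⟨_, hk, by simp_all⟩
  · rintro ⟨k, hk, ⟨h₁, h₂⟩ | ⟨h₁, h₂⟩ | ⟨h₁, h₂⟩⟩
    · exact ⟨0, k, ⟨k, hk, Or.inl rfl⟩, by simpa using h₁, h₂⟩
    · exact ⟨k, 0, ⟨k, hk, Or.inr (Or.inl rfl)⟩, h₁, by simpa using h₂⟩
    · exact ⟨k, k, ⟨k, hk, Or.inr (Or.inr rfl)⟩, h₁, h₂⟩

lemma SubMove.swap {w w' : ℕ × ℕ} (h : SubMove MRW w w') : SubMove MRW w.swap w'.swap := by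
  rw [subMove_MRW_iff] at h ⊢
  obtain ⟨k, hk, h⟩ := h
  exact ⟨k, hk, by simp only [Prod.fst_swap, Prod.snd_swap]; tauto⟩

lemma mem_beattySeq_pos_iff {r : ℝ} (hr : 0 ≤ r) (x : ℕ) :
    (x : ℤ) ∈ {beattySeq r k | k > 0} ↔ ∃ m : ℕ, 0 < m ∧ ⌊(m : ℝ) * r⌋₊ = x := by
  constructor
  · rintro ⟨k, hk, hkx⟩
    lift k to ℕ using hk.le
    refine ⟨k, by exact_mod_cast hk, ?_⟩
    rw [← Int.natCast_inj, Int.natCast_floor_eq_floor (by positivity), ← hkx]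
    simp [beattySeq]
  · rintro ⟨m, hm, rfl⟩
    refine ⟨m, by exact_mod_cast hm, ?_⟩
    rw [Int.natCast_floor_eq_floor (by positivity)]
    simp [beattySeq]

lemma holderConjugate_goldenRatio : Real.HolderConjugate φ (φ + 1) := by
  rw [holderConjugate_iff_eq_conjExponent one_lt_goldenRatio,
    eq_div_iff (sub_pos.2 one_lt_goldenRatio).ne']
  linear_combination goldenRatio_sq

lemma goldenRatio_mul_add (b d : ℝ) : φ * (b + φ * d) = d + φ * (b + d) := by
  linear_combination d * goldenRatio_sq

lemma abs_div_sub_div_lt {A B K P C ε : ℝ} (hP : 1 ≤ P) (hε : 0 < ε) (hA : C / ε < A)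
    (h : |B * P - K * A| ≤ C) : |B / A - K / P| < ε := by
  have hC : 0 ≤ C := (abs_nonneg _).trans h
  have hA₀ : 0 < A := (div_nonneg hC hε.le).trans_lt hA
  have hP₀ : 0 < P := one_pos.trans_le hP
  rw [div_sub_div _ _ hA₀.ne' hP₀.ne', abs_div, abs_of_pos (mul_pos hA₀ hP₀)]
  calc |B * P - A * K| / (A * P) ≤ C / A := by
        rw [mul_comm A K]
        exact div_le_div₀ hC h hA₀ (le_mul_of_one_le_right hA₀.le hP)
    _ < ε := by rwa [div_lt_iff₀ hA₀, mul_comm, ← div_lt_iff₀ hε]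

namespace Wythoff

noncomputable def lower (n : ℕ) : ℕ := ⌊n * φ⌋₊

noncomputable def upper (n : ℕ) : ℕ := ⌊n * (φ + 1)⌋₊

def pairs : Set (ℕ × ℕ) := {p | ∃ n, p = (lower n, upper n) ∨ p = (upper n, lower n)}

lemma upper_eq (n : ℕ) : upper n = lower n + n := by
  rw [upper, lower, mul_add, mul_one, Nat.floor_add_natCast (by positivity)]

@[simp] lemma lower_zero : lower 0 = 0 := by simp [lower]

lemma lower_le (n : ℕ) : (lower n : ℝ) ≤ n * φ :=
  Nat.floor_le (by positivity)

lemma lt_lower_add_one (n : ℕ) : (n : ℝ) * φ < lower n + 1 :=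
  Nat.lt_floor_add_one _

lemma lower_strictMono : StrictMono lower := by
  intro m n hmn
  have : (m : ℝ) * φ + 1 ≤ n * φ := by
    have : (m : ℝ) + 1 ≤ n := by exact_mod_cast hmn
    nlinarith [one_lt_goldenRatio]
  calc lower m < lower m + 1 := Nat.lt_succ_self _
    _ = ⌊(m : ℝ) * φ + 1⌋₊ := (Nat.floor_add_one (by positivity)).symm
    _ ≤ lower n := Nat.floor_le_floor this

lemma upper_strictMono : StrictMono upper := by
  intro m n hmn
  simp only [upper_eq]
  exact Nat.add_lt_add (lower_strictMono hmn) hmn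

lemma lower_eq_zero_iff {n : ℕ} : lower n = 0 ↔ n = 0 :=
  lower_strictMono.injective.eq_iff' lower_zero

theorem xor_lower_upper {x : ℕ} (hx : 0 < x) :
    Xor (∃ m, 0 < m ∧ lower m = x) (∃ m, 0 < m ∧ upper m = x) := by
  have hx' : (x : ℤ) ∈ {n : ℤ | 0 < n} := by simpa using hx
  rwa [← Irrational.beattySeq_symmDiff_beattySeq_pos holderConjugate_goldenRatio
    goldenRatio_irrational, Set.mem_symmDiff, mem_beattySeq_pos_iff (by positivity),
    mem_beattySeq_pos_iff (by positivity)] at hx'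

theorem exists_lower_eq_or_upper_eq (x : ℕ) :
    (∃ m, lower m = x) ∨ ∃ m, 0 < m ∧ upper m = x := by
  rcases x.eq_zero_or_pos with rfl | hx
  · exact Or.inl ⟨0, lower_zero⟩
  · rcases Xor.or (xor_lower_upper hx) with ⟨m, -, hm⟩ | hm
    exacts [Or.inl ⟨m, hm⟩, Or.inr hm]

theorem eq_zero_of_lower_eq_upper {m n : ℕ} (h : lower m = upper n) : m = 0 ∧ n = 0 := by
  rcases n.eq_zero_or_pos with rfl | hn
  · simp only [upper_eq, lower_zero, add_zero, lower_eq_zero_iff] at h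
    exact ⟨h, rfl⟩
  · have hm : 0 < m := Nat.pos_of_ne_zero fun hm ↦ by
      rw [hm, lower_zero, upper_eq] at h; omega
    rcases xor_lower_upper (x := upper n) (by rw [upper_eq]; omega) with ⟨-, h'⟩ | ⟨-, h'⟩
    exacts [(h' ⟨n, hn, rfl⟩).elim, (h' ⟨m, hm, h⟩).elim]

lemma swap_mem_pairs {p : ℕ × ℕ} (h : p ∈ pairs) : p.swap ∈ pairs := by
  obtain ⟨n, rfl | rfl⟩ := h
  exacts [⟨n, Or.inr rfl⟩, ⟨n, Or.inl rfl⟩]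

lemma not_subMove_lower_upper {n : ℕ} {p' : ℕ × ℕ} (hp' : p' ∈ pairs) :
    ¬ SubMove MRW (lower n, upper n) p' := by
  rw [subMove_MRW_iff]
  rintro ⟨k, hk, hmove⟩
  obtain ⟨m, rfl | rfl⟩ := hp'
  · have hup := upper_strictMono.injective.eq_iff (a := m) (b := n)
    have hlo := lower_strictMono.injective.eq_iff (a := m) (b := n)
    have hm := upper_eq m
    have hn := upper_eq n
    rcases hmove with ⟨h₁, h₂⟩ | ⟨h₁, h₂⟩ | ⟨h₁, h₂⟩ <;> simp only at h₁ h₂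
    · obtain rfl := hlo.1 h₁; omega
    · obtain rfl := hup.1 h₂; omega
    · obtain rfl : m = n := by omega
      omega
  · have hm := upper_eq m
    have hn := upper_eq n
    rcases hmove with ⟨h₁, h₂⟩ | ⟨h₁, h₂⟩ | ⟨h₁, h₂⟩ <;> simp only at h₁ h₂
    · obtain ⟨rfl, rfl⟩ := eq_zero_of_lower_eq_upper h₁.symm; omega
    · obtain ⟨rfl, rfl⟩ := eq_zero_of_lower_eq_upper h₂; omega
    · obtain ⟨rfl, rfl⟩ : m = 0 ∧ n = 0 := by omega
      omega

theorem not_subMove_of_mem {p p' : ℕ × ℕ} (hp : p ∈ pairs) (hp' : p' ∈ pairs) :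
    ¬ SubMove MRW p p' := by
  obtain ⟨n, rfl | rfl⟩ := hp
  · exact not_subMove_lower_upper hp'
  · exact fun h ↦ not_subMove_lower_upper (swap_mem_pairs hp') h.swap

lemma exists_subMove_of_not_mem_of_le {x y : ℕ} (hxy : x ≤ y) (hp : (x, y) ∉ pairs) :
    ∃ p' ∈ pairs, SubMove MRW (x, y) p' := by
  obtain ⟨m, rfl⟩ | ⟨m, hm, rfl⟩ := exists_lower_eq_or_upper_eq x
  · rcases Nat.lt_trichotomy y (upper m) with hy | rfl | hy
    · have hd : y - lower m < m := by rw [upper_eq] at hy; omega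
      have hlt := lower_strictMono hd
      refine ⟨(lower (y - lower m), upper (y - lower m)), ⟨_, Or.inl rfl⟩, ?_⟩
      rw [subMove_MRW_iff, upper_eq]
      exact ⟨lower m - lower (y - lower m), by omega,
        Or.inr (Or.inr ⟨by simp only; omega, by simp only; omega⟩)⟩
    · exact absurd ⟨m, Or.inl rfl⟩ hp
    · refine ⟨(lower m, upper m), ⟨m, Or.inl rfl⟩, ?_⟩
      rw [subMove_MRW_iff]
      exact ⟨y - upper m, by omega, Or.inl ⟨rfl, by simp only; omega⟩⟩
  · have hlt : lower m < y := by rw [upper_eq] at hxy; omega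
    refine ⟨(upper m, lower m), ⟨m, Or.inr rfl⟩, ?_⟩
    rw [subMove_MRW_iff]
    exact ⟨y - lower m, by omega, Or.inl ⟨rfl, by simp only; omega⟩⟩

theorem exists_subMove_of_not_mem {p : ℕ × ℕ} (hp : p ∉ pairs) :
    ∃ p' ∈ pairs, SubMove MRW p p' := by
  obtain ⟨x, y⟩ := p
  rcases le_total x y with hxy | hyx
  · exact exists_subMove_of_not_mem_of_le hxy hp
  · obtain ⟨p', hp', hmove⟩ :=
      exists_subMove_of_not_mem_of_le hyx fun h ↦ hp (swap_mem_pairs h)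
    exact ⟨p'.swap, swap_mem_pairs hp', hmove.swap⟩

theorem sub_goldenRatio_mul_mem_Ico {a b : ℕ} (h : (a, b) ∈ pairs) (hab : a ≤ b) :
    (b : ℝ) - φ * a ∈ Set.Ico 0 1 := by
  obtain ⟨n, hn | hn⟩ := h <;> obtain ⟨rfl, rfl⟩ := Prod.mk.inj hn
  · have hsq := goldenRatio_sq
    have hφ := one_lt_goldenRatio
    have hlo := lower_le n
    have hhi := lt_lower_add_one n
    rw [upper_eq, Nat.cast_add]
    constructor <;> nlinarith
  · obtain rfl : n = 0 := by rw [upper_eq] at hab; omega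
    simp [upper_eq]

lemma abs_sub_goldenRatio_mul_lt {x y d : ℕ} (hd : 0 < d) (hxy : x ≤ y)
    (h : (x / d, y / d) ∈ pairs) : |(y : ℝ) - φ * x| < 2 * d := by
  obtain ⟨h₀, h₁⟩ := sub_goldenRatio_mul_mem_Ico h (Nat.div_le_div_right hxy)
  have hx : (x : ℝ) = (x / d : ℕ) * d + (x % d : ℕ) := by exact_mod_cast (Nat.div_add_mod' x d).symm
  have hy : (y : ℝ) = (y / d : ℕ) * d + (y % d : ℕ) := by exact_mod_cast (Nat.div_add_mod' y d).symm
  have hxd : ((x % d : ℕ) : ℝ) < d := by exact_mod_cast Nat.mod_lt x hd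
  have hyd : ((y % d : ℕ) : ℝ) < d := by exact_mod_cast Nat.mod_lt y hd
  have hd' : (0 : ℝ) < d := by exact_mod_cast hd
  have hφ := goldenRatio_lt_two
  have hφ' := goldenRatio_pos
  have hmod : (0 : ℝ) ≤ (x % d : ℕ) := Nat.cast_nonneg _
  have hmod' : (0 : ℝ) ≤ (y % d : ℕ) := Nat.cast_nonneg _
  rw [hx, hy, abs_lt]
  constructor <;> nlinarith

end Wythoff

theorem PPos_iff_of_kernel {move : ℕ × ℕ → ℕ × ℕ → Prop} {X S : Set (ℕ × ℕ)}
    (hX : ∀ p ∈ X, ∀ p', move p p' → p' ∈ X)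
    (hS : ∀ p ∈ X, p ∈ S → ∀ p', move p p' → p' ∉ S)
    (hSc : ∀ p ∈ X, p ∉ S → ∃ p' ∈ S, move p p' ∧ p'.1 + p'.2 < p.1 + p.2) :
    ∀ p ∈ X, (PPos move p ↔ p ∈ S) := by
  suffices ∀ n, ∀ p ∈ X, p.1 + p.2 = n → (PPos move p ↔ p ∈ S) from
    fun p hp ↦ this _ p hp rfl
  intro n
  induction n using Nat.strong_induction_on with
  | _ n ih =>
    intro p hp hn
    rw [PPos]
    constructor
    · intro hP
      by_contra hpS
      obtain ⟨p', hp'S, hmv, hlt⟩ := hSc p hp hpS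
      exact hP p' hmv hlt ((ih _ (hn ▸ hlt) p' (hX p hp p' hmv) rfl).2 hp'S)
    · intro hpS p' hmv hlt hP'
      exact hS p hp hpS p' hmv ((ih _ (hn ▸ hlt) p' (hX p hp p' hmv) rfl).1 hP')

section QCoordinates

variable (p1 q1 p2 q2 : ℕ)

-- The coordinates `(σ, τ)`; outside `B_Q` the truncated subtractions make them junk.
def scaledCoord (pos : ℕ × ℕ) : ℕ × ℕ :=
  (pos.1 * q2 - pos.2 * p2, pos.2 * p1 - pos.1 * q1)

def wythoffCoord (pos : ℕ × ℕ) : ℕ × ℕ :=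
  ((scaledCoord p1 q1 p2 q2 pos).1 / (p1 * q2 - q1 * p2),
    (scaledCoord p1 q1 p2 q2 pos).2 / (p1 * q2 - q1 * p2))

variable {p1 q1 p2 q2} {A B s t : ℕ} {M : Set (ℕ × ℕ)}

lemma scaledCoord_cast (h : inBQ p1 q1 p2 q2 (A, B)) :
    ((scaledCoord p1 q1 p2 q2 (A, B)).1 : ℤ) = A * q2 - B * p2 ∧
      ((scaledCoord p1 q1 p2 q2 (A, B)).2 : ℤ) = B * p1 - A * q1 := by
  obtain ⟨h₁, h₂⟩ := h
  simp only [scaledCoord]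
  push_cast [h₁, h₂]
  exact ⟨rfl, rfl⟩

lemma mul_det_eq_scaledCoord (hD : q1 * p2 < p1 * q2) (h : inBQ p1 q1 p2 q2 (A, B)) :
    A * (p1 * q2 - q1 * p2) =
        (scaledCoord p1 q1 p2 q2 (A, B)).1 * p1 + (scaledCoord p1 q1 p2 q2 (A, B)).2 * p2 ∧
      B * (p1 * q2 - q1 * p2) =
        (scaledCoord p1 q1 p2 q2 (A, B)).1 * q1 + (scaledCoord p1 q1 p2 q2 (A, B)).2 * q2 := by
  obtain ⟨h₁, h₂⟩ := scaledCoord_cast h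
  constructor <;> zify [hD.le] <;> rw [h₁, h₂] <;> ring

lemma le_of_mul_det_le_scaledCoord (hD : q1 * p2 < p1 * q2) (h : inBQ p1 q1 p2 q2 (A, B))
    (hs : s * (p1 * q2 - q1 * p2) ≤ (scaledCoord p1 q1 p2 q2 (A, B)).1)
    (ht : t * (p1 * q2 - q1 * p2) ≤ (scaledCoord p1 q1 p2 q2 (A, B)).2) :
    p1 * s + p2 * t ≤ A ∧ q1 * s + q2 * t ≤ B := by
  obtain ⟨hA, hB⟩ := mul_det_eq_scaledCoord hD h
  have hpos : 0 < p1 * q2 - q1 * p2 := Nat.sub_pos_of_lt hD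
  constructor <;> refine Nat.le_of_mul_le_mul_right ?_ hpos
  · calc (p1 * s + p2 * t) * (p1 * q2 - q1 * p2)
        = s * (p1 * q2 - q1 * p2) * p1 + t * (p1 * q2 - q1 * p2) * p2 := by ring
      _ ≤ _ := by gcongr
      _ = _ := hA.symm
  · calc (q1 * s + q2 * t) * (p1 * q2 - q1 * p2)
        = s * (p1 * q2 - q1 * p2) * q1 + t * (p1 * q2 - q1 * p2) * q2 := by ring
      _ ≤ _ := by gcongr
      _ = _ := hB.symm

lemma inBQ_sub_iff (hD : q1 * p2 < p1 * q2) (h : inBQ p1 q1 p2 q2 (A, B))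
    (hA : p1 * s + p2 * t ≤ A) (hB : q1 * s + q2 * t ≤ B) :
    inBQ p1 q1 p2 q2 (A - (p1 * s + p2 * t), B - (q1 * s + q2 * t)) ↔
      s * (p1 * q2 - q1 * p2) ≤ (scaledCoord p1 q1 p2 q2 (A, B)).1 ∧
        t * (p1 * q2 - q1 * p2) ≤ (scaledCoord p1 q1 p2 q2 (A, B)).2 := by
  obtain ⟨hc₁, hc₂⟩ := scaledCoord_cast h
  simp only [inBQ]
  zify [hA, hB, hD.le]
  rw [hc₁, hc₂]
  constructor <;> rintro ⟨h₁, h₂⟩ <;> constructor <;> linarith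

lemma QMove_iff (hD : q1 * p2 < p1 * q2) (h : inBQ p1 q1 p2 q2 (A, B)) {pos' : ℕ × ℕ} :
    QMove p1 q1 p2 q2 M (A, B) pos' ↔ ∃ s t : ℕ, (s, t) ∈ M ∧
      s * (p1 * q2 - q1 * p2) ≤ (scaledCoord p1 q1 p2 q2 (A, B)).1 ∧
      t * (p1 * q2 - q1 * p2) ≤ (scaledCoord p1 q1 p2 q2 (A, B)).2 ∧
      pos' = (A - (p1 * s + p2 * t), B - (q1 * s + q2 * t)) := by
  constructor
  · rintro ⟨s, t, hM, hA, hB, h₁, h₂, h'⟩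
    obtain rfl : pos' = (A - (p1 * s + p2 * t), B - (q1 * s + q2 * t)) := Prod.ext h₁ h₂
    exact ⟨s, t, hM, (inBQ_sub_iff hD h hA hB).1 h' |>.1, (inBQ_sub_iff hD h hA hB).1 h' |>.2, rfl⟩
  · rintro ⟨s, t, hM, hs, ht, rfl⟩
    obtain ⟨hA, hB⟩ := le_of_mul_det_le_scaledCoord hD h hs ht
    exact ⟨s, t, hM, hA, hB, rfl, rfl, (inBQ_sub_iff hD h hA hB).2 ⟨hs, ht⟩⟩

lemma scaledCoord_sub (hD : q1 * p2 < p1 * q2) (h : inBQ p1 q1 p2 q2 (A, B))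
    (hs : s * (p1 * q2 - q1 * p2) ≤ (scaledCoord p1 q1 p2 q2 (A, B)).1)
    (ht : t * (p1 * q2 - q1 * p2) ≤ (scaledCoord p1 q1 p2 q2 (A, B)).2) :
    scaledCoord p1 q1 p2 q2 (A - (p1 * s + p2 * t), B - (q1 * s + q2 * t)) =
      ((scaledCoord p1 q1 p2 q2 (A, B)).1 - s * (p1 * q2 - q1 * p2),
        (scaledCoord p1 q1 p2 q2 (A, B)).2 - t * (p1 * q2 - q1 * p2)) := by
  obtain ⟨hA, hB⟩ := le_of_mul_det_le_scaledCoord hD h hs ht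
  obtain ⟨hc₁, hc₂⟩ := scaledCoord_cast h
  obtain ⟨hc₁', hc₂'⟩ := scaledCoord_cast ((inBQ_sub_iff hD h hA hB).2 ⟨hs, ht⟩)
  ext <;> apply Nat.cast_injective (R := ℤ)
  · rw [hc₁', Nat.cast_sub hs, hc₁]
    push_cast [hA, hB, hD.le]
    ring
  · rw [hc₂', Nat.cast_sub ht, hc₂]
    push_cast [hA, hB, hD.le]
    ring

lemma subMove_wythoffCoord_of_QMove (hD : q1 * p2 < p1 * q2) (h : inBQ p1 q1 p2 q2 (A, B))
    {pos' : ℕ × ℕ} (hmv : QMove p1 q1 p2 q2 M (A, B) pos') :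
    SubMove M (wythoffCoord p1 q1 p2 q2 (A, B)) (wythoffCoord p1 q1 p2 q2 pos') := by
  obtain ⟨s, t, hM, hs, ht, rfl⟩ := (QMove_iff hD h).1 hmv
  have hpos : 0 < p1 * q2 - q1 * p2 := Nat.sub_pos_of_lt hD
  have hs' := (Nat.le_div_iff_mul_le hpos).2 hs
  have ht' := (Nat.le_div_iff_mul_le hpos).2 ht
  refine ⟨s, t, hM, ?_, ?_⟩ <;>
    simp only [wythoffCoord, scaledCoord_sub hD h hs ht, mul_comm _ (p1 * q2 - q1 * p2),
      Nat.sub_mul_div] <;> omega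

lemma exists_QMove_of_subMove_wythoffCoord (hD : q1 * p2 < p1 * q2)
    (h : inBQ p1 q1 p2 q2 (A, B)) {w : ℕ × ℕ}
    (hmv : SubMove M (wythoffCoord p1 q1 p2 q2 (A, B)) w) :
    ∃ pos', QMove p1 q1 p2 q2 M (A, B) pos' ∧ wythoffCoord p1 q1 p2 q2 pos' = w := by
  obtain ⟨s, t, hM, h₁, h₂⟩ := hmv
  have hpos : 0 < p1 * q2 - q1 * p2 := Nat.sub_pos_of_lt hD
  have hs := (Nat.le_div_iff_mul_le hpos).1 (Nat.le.intro (add_comm w.1 s ▸ h₁))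
  have ht := (Nat.le_div_iff_mul_le hpos).1 (Nat.le.intro (add_comm w.2 t ▸ h₂))
  refine ⟨_, (QMove_iff hD h).2 ⟨s, t, hM, hs, ht, rfl⟩, ?_⟩
  simp only [wythoffCoord, scaledCoord_sub hD h hs ht, mul_comm _ (p1 * q2 - q1 * p2),
    Nat.sub_mul_div]
  ext <;> simp only [wythoffCoord] at h₁ h₂ <;> omega

lemma QMove.add_lt_add (hp1 : 0 < p1) (hq2 : 0 < q2) {pos pos' : ℕ × ℕ}
    (hmv : QMove p1 q1 p2 q2 MRW pos pos') : pos'.1 + pos'.2 < pos.1 + pos.2 := by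
  obtain ⟨s, t, ⟨k, hk, hst⟩, hA, hB, h₁, h₂, -⟩ := hmv
  have : 0 < p1 * s + q2 * t := by
    rcases hst with hst | hst | hst <;> obtain ⟨rfl, rfl⟩ := Prod.mk.inj hst <;> positivity
  omega

theorem PPos_RW_iff (hp1 : 0 < p1) (hq2 : 0 < q2) (hD : q1 * p2 < p1 * q2)
    (h : inBQ p1 q1 p2 q2 (A, B)) :
    PPos (QMove p1 q1 p2 q2 MRW) (A, B) ↔ wythoffCoord p1 q1 p2 q2 (A, B) ∈ Wythoff.pairs := by
  refine PPos_iff_of_kernel (X := {pos | inBQ p1 q1 p2 q2 pos})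
    (S := {pos | wythoffCoord p1 q1 p2 q2 pos ∈ Wythoff.pairs}) ?_ ?_ ?_ (A, B) h
  · rintro p - p' ⟨s, t, -, -, -, -, -, hp'⟩
    exact hp'
  · rintro ⟨A, B⟩ hp hpS p' hmv hp'S
    exact Wythoff.not_subMove_of_mem hpS hp'S (subMove_wythoffCoord_of_QMove hD hp hmv)
  · rintro ⟨A, B⟩ hp hpS
    obtain ⟨w, hw, hmv⟩ := Wythoff.exists_subMove_of_not_mem hpS
    obtain ⟨p', hmv', rfl⟩ := exists_QMove_of_subMove_wythoffCoord hD hp hmv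
    exact ⟨p', hw, hmv', hmv'.add_lt_add hp1 hq2⟩

lemma scaledCoord_fst_le_snd (h : inBQ p1 q1 p2 q2 (A, B))
    (hr : ((q1 : ℝ) + q2) * A ≤ B * ((p1 : ℝ) + p2)) :
    (scaledCoord p1 q1 p2 q2 (A, B)).1 ≤ (scaledCoord p1 q1 p2 q2 (A, B)).2 := by
  obtain ⟨hc₁, hc₂⟩ := scaledCoord_cast h
  have hr' : (q1 + q2) * A ≤ B * (p1 + p2) := by exact_mod_cast hr
  zify at hr' ⊢
  rw [hc₁, hc₂]
  linarith

lemma mul_sub_mul_eq_scaledCoord (hD : q1 * p2 < p1 * q2) (h : inBQ p1 q1 p2 q2 (A, B)) :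
    (B : ℝ) * (p1 + φ * p2) - (q1 + φ * q2) * A =
      (scaledCoord p1 q1 p2 q2 (A, B)).2 - φ * (scaledCoord p1 q1 p2 q2 (A, B)).1 := by
  obtain ⟨hA, hB⟩ := mul_det_eq_scaledCoord hD h
  have hDpos : (0 : ℝ) < p1 * q2 - q1 * p2 := by
    rw [sub_pos]; exact_mod_cast hD
  have hA' := congrArg (Nat.cast : ℕ → ℝ) hA
  have hB' := congrArg (Nat.cast : ℕ → ℝ) hB
  push_cast [hD.le] at hA' hB'
  apply mul_right_cancel₀ hDpos.ne'
  linear_combination (↑p1 + φ * ↑p2) * hB' - (↑q1 + φ * ↑q2) * hA'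

end QCoordinates

theorem stmt_14 (p1 q1 p2 q2 : ℕ) (hp1 : 0 < p1) (hq2 : 0 < q2)
    (hD : q1 * p2 < p1 * q2) (ε : ℝ) (hε : 0 < ε) :
    ∃ N : ℕ, ∀ A B : ℕ, inBQ p1 q1 p2 q2 (A, B) →
      PPos (QMove p1 q1 p2 q2 MRW) (A, B) → N ≤ A →
      ((q1 : ℝ) + (q2 : ℝ)) / ((p1 : ℝ) + (p2 : ℝ)) ≤ (B : ℝ) / (A : ℝ) →
      |(B : ℝ) / (A : ℝ) -
          ((q2 : ℝ) + phi * ((q1 : ℝ) + (q2 : ℝ))) /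
            ((p2 : ℝ) + phi * ((p1 : ℝ) + (p2 : ℝ)))| < ε := by
  set D := p1 * q2 - q1 * p2
  refine ⟨⌈2 * D / ε⌉₊ + 1, fun A B h hP hN hr ↦ ?_⟩
  have hA : 2 * D / ε < A := by
    have := Nat.le_ceil (2 * D / ε)
    have : ((⌈2 * D / ε⌉₊ + 1 : ℕ) : ℝ) ≤ A := by exact_mod_cast hN
    push_cast at this
    linarith
  have hA₀ : (0 : ℝ) < A := (by positivity : (0 : ℝ) ≤ 2 * D / ε).trans_lt hA
  have hp1' : (1 : ℝ) ≤ p1 := by exact_mod_cast hp1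
  have hupper := scaledCoord_fst_le_snd h
    ((div_le_div_iff₀ (by positivity) hA₀).1 hr)
  have hwythoff := (PPos_RW_iff hp1 hq2 hD h).1 hP
  have hbound := Wythoff.abs_sub_goldenRatio_mul_lt (Nat.sub_pos_of_lt hD) hupper hwythoff
  rw [show phi = φ from rfl, ← goldenRatio_mul_add, ← goldenRatio_mul_add,
    mul_div_mul_left _ _ goldenRatio_ne_zero]
  refine abs_div_sub_div_lt ?_ hε hA ?_
  · nlinarith [goldenRatio_pos, (Nat.cast_nonneg p2 : (0 : ℝ) ≤ p2)]
  · rw [mul_sub_mul_eq_scaledCoord hD h]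
    exact hbound.le
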